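/- Suppose A ∈ 𝓑 is a small set, with positive integer k, probability measure ν and β > 0 such that P^k(x,·) ≥ β ν for all x ∈ A, and suppose ℙ^x(T_A < ∞) = 1 for all x ∈ S. Then the chain is ν-recurrent: for every B ∈ 𝓑 with ν(B) > 0 and every x ∈ S, ℙ^x(T_B < ∞) = 1. -/

import Mathlib

open MeasureTheory ProbabilityTheory
open scoped ENNReal NNReal

noncomputable section

/-- The hitting time `T_A = inf {n ≥ 1 : ω n ∈ A}`, with value `⊤ : ℕ∞` if no such `n` exists. -/
def hitTime {S : Type*} (A : Set S) (ω : ℕ → S) : ℕ∞ :=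
  sInf ((fun k : ℕ => (k : ℕ∞)) '' {k : ℕ | 1 ≤ k ∧ ω k ∈ A})

/-- `IsMarkovPath K μ₀ L` says that `L` is the law on path space `ℕ → E` of the
time-homogeneous Markov chain with transition kernel `K` and initial distribution `μ₀`
(the measure produced by the Ionescu–Tulcea construction), characterized through its
finite-dimensional distributions. -/
def IsMarkovPath {E : Type*} [MeasurableSpace E] (K : Kernel E E) (μ₀ : Measure E)
    (L : Measure (ℕ → E)) : Prop :=
  IsProbabilityMeasure L ∧
    L.map (fun ω => ω 0) = μ₀ ∧
    ∀ n : ℕ,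
      L.map (fun ω => fun i : Fin (n + 2) => ω (i : ℕ)) =
        (L.map (fun ω => fun i : Fin (n + 1) => ω (i : ℕ))).bind
          (fun v => (K (v (Fin.last n))).map (Fin.snoc v))

/-- The `n`-step transition kernel `K^n`. -/
def kiter {E : Type*} [MeasurableSpace E] (K : Kernel E E) : ℕ → Kernel E E
  | 0 => Kernel.id
  | n + 1 => (kiter K n) ∘ₖ K

instance kiter.isMarkovKernel {E : Type*} [MeasurableSpace E] (K : Kernel E E)
    [IsMarkovKernel K] (n : ℕ) : IsMarkovKernel (kiter K n) := by
  induction n with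
  | zero => rw [kiter]; infer_instance
  | succ n ih => rw [kiter]; infer_instance


/-!
Let `h x` be the probability, starting from `x`, of staying in `Bᶜ` at all times `n ≥ 1`, and let
`u = ⨆ x, h x`. From a point of `A`, the chain is in `B` at time `k` with probability at least
`β ν(B)`, and afterwards it avoids `B` with probability at most `u`; so `h ≤ u (1 - β ν(B))` on `A`.
Since `A` is hit almost surely, splitting the paths according to the time `N` of their first entry
into `A` and applying the Markov property at each fixed time `N` gives the same bound at every
starting point. Hence `u ≤ u (1 - β ν(B))`, which forces `u = 0`.
-/

lemma kiter_eq_pow {S : Type*} [MeasurableSpace S] (K : Kernel S S) (n : ℕ) :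
    kiter K n = K ^ n := by
  induction n with
  | zero => rfl
  | succ n ih => rw [kiter, ih, pow_succ]; rfl

namespace ProbabilityTheory.Kernel

variable {S : Type*} [MeasurableSpace S]

instance isMarkovKernel_pow (K : Kernel S S) [IsMarkovKernel K] (n : ℕ) :
    IsMarkovKernel (K ^ n) := by
  rw [← kiter_eq_pow]; infer_instance

lemma pow_zero_apply_univ (K : Kernel S S) (x : S) : (K ^ 0) x Set.univ = 1 := by
  simp [pow_zero, show (1 : Kernel S S) = Kernel.id from rfl, id_apply]

lemma pow_succ_apply_univ (K : Kernel S S) (m : ℕ) (x : S) :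
    (K ^ (m + 1)) x Set.univ = ∫⁻ y, (K ^ m) y Set.univ ∂(K x) := by
  rw [pow_succ]
  exact comp_apply' _ _ _ MeasurableSet.univ

lemma antitone_pow_apply_univ {K : Kernel S S} (hK : ∀ x, K x Set.univ ≤ 1) (x : S) :
    Antitone fun m => (K ^ m) x Set.univ := by
  refine antitone_nat_of_succ_le fun m => ?_
  rw [pow_succ_apply_eq_lintegral _ _ _ MeasurableSet.univ]
  exact (lintegral_mono hK).trans_eq lintegral_one

lemma pow_apply_mono {K K' : Kernel S S} (h : ∀ x, K x ≤ K' x) (n : ℕ) (x : S) :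
    (K ^ n) x ≤ (K' ^ n) x := by
  induction n generalizing x with
  | zero => rfl
  | succ n ih =>
    refine Measure.le_iff.mpr fun s hs => ?_
    simp only [pow_succ_apply_eq_lintegral _ _ _ hs]
    exact lintegral_mono' (ih x) fun y => h y s

lemma pow_restrict_apply_le {P : Kernel S S} {G : Set S} (hG : MeasurableSet G) {k : ℕ}
    (hk : 1 ≤ k) (x : S) : ((P.restrict hG) ^ k) x ≤ ((P ^ k) x).restrict G := by
  obtain ⟨j, rfl⟩ := Nat.exists_eq_add_of_le' hk
  refine Measure.le_iff.mpr fun s hs => ?_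
  rw [Measure.restrict_apply hs, pow_succ_apply_eq_lintegral _ _ _ hs,
    pow_succ_apply_eq_lintegral _ _ _ (hs.inter hG)]
  simp only [restrict_apply' _ hG _ hs]
  exact lintegral_mono'
    (pow_apply_mono (fun y => (restrict_apply P hG y).trans_le Measure.restrict_le_self) j x) le_rfl

end ProbabilityTheory.Kernel

section Paths

variable {S : Type*} {n : ℕ}

def pathPrefix (n : ℕ) (ω : ℕ → S) : Fin (n + 1) → S := fun i => ω i

def firstEntry (A : Set S) (N : ℕ) : Set (Fin (N + 1) → S) :=
  {v | v (Fin.last N) ∈ A ∧ ∀ i : Fin (N + 1), 0 < (i : ℕ) → (i : ℕ) < N → v i ∉ A}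

lemma pathPrefix_mem_firstEntry {A : Set S} {N : ℕ} {ω : ℕ → S} :
    pathPrefix N ω ∈ firstEntry A N ↔ ω N ∈ A ∧ ∀ i, 0 < i → i < N → ω i ∉ A := by
  refine and_congr (by simp [pathPrefix]) ⟨fun h i h₀ hN => h ⟨i, by omega⟩ h₀ hN, ?_⟩
  exact fun h i h₀ hN => h i h₀ hN

lemma hitTime_lt_top_iff {A : Set S} {ω : ℕ → S} :
    hitTime A ω < ⊤ ↔ ∃ i, 0 < i ∧ ω i ∈ A := by
  simp only [lt_top_iff_ne_top, Ne, hitTime, sInf_eq_top, Set.forall_mem_image,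
    ENat.natCast_ne_top, imp_false, not_forall, not_not]
  rfl

lemma setOf_hitTime_lt_top (A : Set S) :
    {ω : ℕ → S | hitTime A ω < ⊤} = {ω | ∀ i ∈ Set.Ioi 0, ω i ∈ Aᶜ}ᶜ := by
  ext ω
  simp [hitTime_lt_top_iff]

lemma setOf_stay_succ (D : Set (Fin (n + 1) → S)) (G : Set S) (m : ℕ) :
    {ω | pathPrefix n ω ∈ D ∧ ∀ i ∈ Set.Ioc n (n + (m + 1)), ω i ∈ G} =
      {ω | pathPrefix (n + 1) ω ∈
          {w : Fin (n + 2) → S | Fin.init w ∈ D ∧ w (Fin.last (n + 1)) ∈ G} ∧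
        ∀ i ∈ Set.Ioc (n + 1) (n + 1 + m), ω i ∈ G} := by
  ext ω
  change _ ↔ (pathPrefix n ω ∈ D ∧ ω (n + 1) ∈ G) ∧ _
  simp only [Set.mem_Ioc]
  constructor
  · rintro ⟨hv, hstay⟩
    exact ⟨⟨hv, hstay _ ⟨by omega, by omega⟩⟩, fun i hi => hstay i ⟨by omega, by omega⟩⟩
  · rintro ⟨⟨hv, hnext⟩, hstay⟩
    refine ⟨hv, fun i hi => ?_⟩
    rcases (Nat.succ_le_of_lt hi.1).eq_or_lt with rfl | h
    exacts [hnext, hstay i ⟨h, by omega⟩]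

lemma pairwise_disjoint_preimage_firstEntry (A : Set S) :
    Pairwise (Function.onFun Disjoint fun N => pathPrefix (N + 1) ⁻¹' firstEntry A (N + 1)) := by
  refine (pairwise_disjoint_on _).mpr fun a b hab => Set.disjoint_left.mpr fun ω hωa hωb => ?_
  exact (pathPrefix_mem_firstEntry.mp hωb).2 (a + 1) (by omega) (by omega)
    (pathPrefix_mem_firstEntry.mp hωa).1

lemma setOf_hitTime_lt_top_subset_iUnion (A : Set S) :
    {ω : ℕ → S | hitTime A ω < ⊤} ⊆ ⋃ N, pathPrefix (N + 1) ⁻¹' firstEntry A (N + 1) := by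
  classical
  intro ω hω
  have h := hitTime_lt_top_iff.mp hω
  obtain ⟨N, hN⟩ := Nat.exists_eq_add_one_of_ne_zero (Nat.find_spec h).1.ne'
  refine Set.mem_iUnion.mpr ⟨N, pathPrefix_mem_firstEntry.mpr ⟨?_, ?_⟩⟩
  · exact hN ▸ (Nat.find_spec h).2
  · exact fun i h₀ hi hiA => Nat.find_min h (hN ▸ hi) ⟨h₀, hiA⟩

variable [MeasurableSpace S]

lemma measurable_pathPrefix (n : ℕ) : Measurable (pathPrefix (S := S) n) :=
  measurable_pi_lambda _ fun i => measurable_pi_apply (i : ℕ)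

lemma measurableSet_firstEntry {A : Set S} (hA : MeasurableSet A) (N : ℕ) :
    MeasurableSet (firstEntry A N) := by
  unfold firstEntry
  measurability

lemma measurableSet_forall_mem_apply_mem {G : Set S} (hG : MeasurableSet G) (I : Set ℕ) :
    MeasurableSet {ω : ℕ → S | ∀ i ∈ I, ω i ∈ G} := by
  have hI : {ω : ℕ → S | ∀ i ∈ I, ω i ∈ G} = ⋂ i ∈ I, (fun ω => ω i) ⁻¹' G := by
    ext; simp
  rw [hI]
  exact MeasurableSet.biInter I.to_countable fun i _ => measurable_pi_apply i hG

lemma measurable_fin_snoc {n : ℕ} :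
    Measurable fun p : (Fin n → S) × S => (Fin.snoc p.1 p.2 : Fin (n + 1) → S) := by
  refine measurable_pi_lambda _ fun i => ?_
  induction i using Fin.lastCases with
  | last => simpa only [Fin.snoc_last] using measurable_snd
  | cast j => simp only [Fin.snoc_castSucc]; exact (measurable_pi_apply j).comp measurable_fst

lemma measurable_fin_snoc_right {n : ℕ} (v : Fin n → S) :
    Measurable (Fin.snoc (α := fun _ => S) v) :=
  measurable_fin_snoc.comp measurable_prodMk_left

end Paths

section StayProb

variable {S : Type*} [MeasurableSpace S] {P : Kernel S S}

/-- `((P.restrict hG) ^ m) x univ` is the probability that the chain started at `x` is in `G` at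
times `1, …, m`. -/
def stayProb (P : Kernel S S) {G : Set S} (hG : MeasurableSet G) (x : S) : ℝ≥0∞ :=
  ⨅ m, ((P.restrict hG) ^ m) x Set.univ

lemma measurable_stayProb {G : Set S} (hG : MeasurableSet G) : Measurable (stayProb P hG) :=
  Measurable.iInf fun _ => Kernel.measurable_coe _ MeasurableSet.univ

lemma stayProb_le_one {G : Set S} (hG : MeasurableSet G) (x : S) : stayProb P hG x ≤ 1 :=
  (iInf_le _ 0).trans_eq (Kernel.pow_zero_apply_univ _ x)

variable [IsMarkovKernel P]

lemma antitone_pow_restrict_apply_univ {G : Set S} (hG : MeasurableSet G) (x : S) :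
    Antitone fun m => ((P.restrict hG) ^ m) x Set.univ :=
  Kernel.antitone_pow_apply_univ (fun y => by
    rw [Kernel.restrict_apply, Measure.restrict_apply_univ]; exact prob_le_one) x

lemma stayProb_le_setLIntegral_pow {G : Set S} (hG : MeasurableSet G) {k : ℕ} (hk : 1 ≤ k)
    (x : S) : stayProb P hG x ≤ ∫⁻ y in G, stayProb P hG y ∂((P ^ k) x) := by
  have hmeas (m : ℕ) : Measurable fun y => ((P.restrict hG) ^ m) y Set.univ :=
    Kernel.measurable_coe _ MeasurableSet.univ
  have hfin : ∫⁻ y in G, ((P.restrict hG) ^ 0) y Set.univ ∂((P ^ k) x) ≠ ⊤ := by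
    simp only [Kernel.pow_zero_apply_univ, setLIntegral_one]
    exact measure_ne_top _ _
  unfold stayProb
  rw [lintegral_iInf hmeas (fun a b hab y => antitone_pow_restrict_apply_univ hG y hab) hfin]
  refine le_iInf fun m => ?_
  calc ⨅ j, ((P.restrict hG) ^ j) x Set.univ ≤ ((P.restrict hG) ^ (k + m)) x Set.univ :=
        iInf_le _ _
    _ = ∫⁻ y, ((P.restrict hG) ^ m) y Set.univ ∂(((P.restrict hG) ^ k) x) :=
        Kernel.pow_add_apply_eq_lintegral _ _ _ _ MeasurableSet.univ
    _ ≤ ∫⁻ y in G, ((P.restrict hG) ^ m) y Set.univ ∂((P ^ k) x) :=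
        lintegral_mono' (Kernel.pow_restrict_apply_le hG hk x) le_rfl

lemma stayProb_compl_le_of_smul_le_pow {B : Set S} (hB : MeasurableSet B) {k : ℕ} (hk : 1 ≤ k)
    {ν : Measure S} {β : ℝ≥0∞} {x : S} (hsmall : β • ν ≤ (P ^ k) x) :
    stayProb P hB.compl x ≤ (⨆ y, stayProb P hB.compl y) * (1 - β * ν B) :=
  calc stayProb P hB.compl x ≤ ∫⁻ y in Bᶜ, stayProb P hB.compl y ∂((P ^ k) x) :=
        stayProb_le_setLIntegral_pow hB.compl hk x
    _ ≤ (⨆ y, stayProb P hB.compl y) * (P ^ k) x Bᶜ := by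
        rw [← setLIntegral_const]
        exact lintegral_mono fun y => le_iSup (stayProb P hB.compl) y
    _ ≤ (⨆ y, stayProb P hB.compl y) * (1 - β * ν B) := by
        rw [prob_compl_eq_one_sub hB]
        gcongr
        exact hsmall B

end StayProb

namespace IsMarkovPath

variable {S : Type*} [MeasurableSpace S] {P : Kernel S S} [IsMarkovKernel P] {μ₀ : Measure S}
  {L : Measure (ℕ → S)}

lemma measurable_map_snoc_last (n : ℕ) :
    Measurable fun v : Fin (n + 1) → S =>
      (P (v (Fin.last n))).map (Fin.snoc (α := fun _ => S) v) := by
  refine Measure.measurable_of_measurable_coe _ fun s hs => ?_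
  simp_rw [Measure.map_apply (measurable_fin_snoc_right _) hs]
  exact Kernel.measurable_kernel_prodMk_left (κ := P.comap _ (measurable_pi_apply (Fin.last n)))
    (measurable_fin_snoc hs)

lemma lintegral_map_pathPrefix_succ (hL : IsMarkovPath P μ₀ L) (n : ℕ)
    {g : (Fin (n + 2) → S) → ℝ≥0∞} (hg : Measurable g) :
    ∫⁻ w, g w ∂(L.map (pathPrefix (n + 1))) =
      ∫⁻ v, ∫⁻ y, g (Fin.snoc v y) ∂(P (v (Fin.last n))) ∂(L.map (pathPrefix n)) := by
  have hstep : L.map (pathPrefix (n + 1)) = (L.map (pathPrefix n)).bind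
      fun v => (P (v (Fin.last n))).map (Fin.snoc (α := fun _ => S) v) := hL.2.2 n
  rw [hstep, Measure.lintegral_bind (measurable_map_snoc_last n).aemeasurable hg.aemeasurable]
  exact lintegral_congr fun v => lintegral_map hg (measurable_fin_snoc_right v)

lemma measure_prefix_stay (hL : IsMarkovPath P μ₀ L) {G : Set S} (hG : MeasurableSet G)
    (m : ℕ) {n : ℕ} {D : Set (Fin (n + 1) → S)} (hD : MeasurableSet D) :
    L {ω | pathPrefix n ω ∈ D ∧ ∀ i ∈ Set.Ioc n (n + m), ω i ∈ G} =
      ∫⁻ v in D, ((P.restrict hG) ^ m) (v (Fin.last n)) Set.univ ∂(L.map (pathPrefix n)) := by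
  induction m generalizing n with
  | zero =>
    simp only [add_zero, Set.Ioc_self, Set.mem_empty_iff_false, IsEmpty.forall_iff, implies_true,
      and_true, Kernel.pow_zero_apply_univ, setLIntegral_one,
      Measure.map_apply (measurable_pathPrefix n) hD]
    rfl
  | succ m ih =>
    set Q : S → ℝ≥0∞ := fun y => ((P.restrict hG) ^ m) y Set.univ
    have hQ : Measurable Q := Kernel.measurable_coe _ MeasurableSet.univ
    set D' : Set (Fin (n + 2) → S) := {w | Fin.init w ∈ D ∧ w (Fin.last (n + 1)) ∈ G}
    have hD' : MeasurableSet D' :=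
      (measurable_pi_lambda _ (fun i => measurable_pi_apply _) hD).inter
        (measurable_pi_apply _ hG)
    have hsnoc (v : Fin (n + 1) → S) (y : S) :
        D'.indicator (fun w => Q (w (Fin.last (n + 1)))) (Fin.snoc v y) =
          D.indicator (fun _ => G.indicator Q y) v := by
      by_cases hv : v ∈ D <;> by_cases hy : y ∈ G <;> simp [D', hv, hy, Fin.init_snoc]
    rw [setOf_stay_succ, ih hD']
    change ∫⁻ w in D', Q (w (Fin.last (n + 1))) ∂_ = _
    rw [← lintegral_indicator hD',
      hL.lintegral_map_pathPrefix_succ n (g := D'.indicator fun w => Q (w (Fin.last (n + 1))))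
        ((hQ.comp (measurable_pi_apply _)).indicator hD'),
      ← lintegral_indicator hD]
    refine lintegral_congr fun v => ?_
    simp only [hsnoc]
    by_cases hv : v ∈ D
    · simp [hv, Kernel.pow_succ_apply_univ, Kernel.restrict_apply, lintegral_indicator hG, Q]
    · simp [hv]

lemma measure_prefix_stayForever (hL : IsMarkovPath P μ₀ L) {G : Set S}
    (hG : MeasurableSet G) {n : ℕ} {D : Set (Fin (n + 1) → S)} (hD : MeasurableSet D) :
    L {ω | pathPrefix n ω ∈ D ∧ ∀ i ∈ Set.Ioi n, ω i ∈ G} =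
      ∫⁻ v in D, stayProb P hG (v (Fin.last n)) ∂(L.map (pathPrefix n)) := by
  have := hL.1
  let E (m : ℕ) := {ω | pathPrefix n ω ∈ D ∧ ∀ i ∈ Set.Ioc n (n + m), ω i ∈ G}
  have hE : {ω | pathPrefix n ω ∈ D ∧ ∀ i ∈ Set.Ioi n, ω i ∈ G} = ⋂ m, E m := by
    ext ω
    simp only [Set.mem_iInter, Set.mem_Ioi, Set.mem_Ioc, E]
    refine ⟨fun h m => ⟨h.1, fun i hi => h.2 i hi.1⟩, fun h => ⟨(h 0).1, fun i hi => ?_⟩⟩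
    exact (h i).2 i ⟨hi, by omega⟩
  have hE_anti : Antitone E := fun a b hab ω hω =>
    ⟨hω.1, fun i hi => hω.2 i ⟨hi.1, by have := hi.2; omega⟩⟩
  have hE_meas (m : ℕ) : MeasurableSet (E m) :=
    (measurable_pathPrefix n hD).inter (measurableSet_forall_mem_apply_mem hG _)
  rw [hE, hE_anti.measure_iInter (fun m => (hE_meas m).nullMeasurableSet)
    ⟨0, measure_ne_top _ _⟩]
  simp only [E, hL.measure_prefix_stay hG _ hD]
  refine (lintegral_iInf (fun m => (Kernel.measurable_coe _ MeasurableSet.univ).comp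
    (measurable_pi_apply _)) (fun a b hab v => antitone_pow_restrict_apply_univ hG _ hab) ?_).symm
  simp only [Function.comp_def, Kernel.pow_zero_apply_univ, setLIntegral_one]
  exact measure_ne_top _ _

lemma measure_stayForever_eq_stayProb {x : S} (hL : IsMarkovPath P (Measure.dirac x) L)
    {G : Set S} (hG : MeasurableSet G) :
    L {ω | ∀ i ∈ Set.Ioi 0, ω i ∈ G} = stayProb P hG x := by
  have h := hL.measure_prefix_stayForever hG (n := 0) MeasurableSet.univ
  simp only [Set.mem_univ, true_and, Measure.restrict_univ] at h
  have hf : Measurable fun v : Fin (0 + 1) → S => stayProb P hG (v (Fin.last 0)) :=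
    (measurable_stayProb hG).comp (measurable_pi_apply _)
  rw [h, lintegral_map hf (measurable_pathPrefix 0),
    ← lintegral_map (measurable_stayProb hG) (measurable_pi_apply 0)]
  change ∫⁻ y, stayProb P hG y ∂(L.map fun ω => ω 0) = _
  rw [hL.2.1, lintegral_dirac' _ (measurable_stayProb hG)]

lemma measure_stayForever_le_of_hit (hL : IsMarkovPath P μ₀ L)
    {A G : Set S} (hA : MeasurableSet A) (hG : MeasurableSet G)
    (hhit : L {ω | hitTime A ω < ⊤} = 1) {c : ℝ≥0∞} (hc : ∀ y ∈ A, stayProb P hG y ≤ c) :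
    L {ω | ∀ i ∈ Set.Ioi 0, ω i ∈ G} ≤ c := by
  have := hL.1
  let F (N : ℕ) : Set (ℕ → S) := pathPrefix (N + 1) ⁻¹' firstEntry A (N + 1)
  have hF_meas (N : ℕ) : MeasurableSet (F N) :=
    measurable_pathPrefix _ (measurableSet_firstEntry hA _)
  have hcover : {ω | ∀ i ∈ Set.Ioi 0, ω i ∈ G} ∩ {ω | hitTime A ω < ⊤} ⊆
      ⋃ N, {ω | pathPrefix (N + 1) ω ∈ firstEntry A (N + 1) ∧ ∀ i ∈ Set.Ioi (N + 1), ω i ∈ G} :=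
    fun ω ⟨hstay, hω⟩ =>
      let ⟨N, hN⟩ := Set.mem_iUnion.mp (setOf_hitTime_lt_top_subset_iUnion A hω)
      Set.mem_iUnion.mpr ⟨N, hN, fun i hi => hstay i (N.succ_pos.trans hi)⟩
  have hstay_hit : L ({ω | ∀ i ∈ Set.Ioi 0, ω i ∈ G} ∩ {ω | hitTime A ω < ⊤}) =
      L {ω | ∀ i ∈ Set.Ioi 0, ω i ∈ G} := by
    refine measure_inter_conull ((prob_compl_eq_zero_iff ?_).mpr hhit)
    rw [setOf_hitTime_lt_top]
    exact (measurableSet_forall_mem_apply_mem hA.compl _).compl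
  calc L {ω | ∀ i ∈ Set.Ioi 0, ω i ∈ G}
      ≤ ∑' N, L {ω | pathPrefix (N + 1) ω ∈ firstEntry A (N + 1) ∧
          ∀ i ∈ Set.Ioi (N + 1), ω i ∈ G} :=
        hstay_hit ▸ (measure_mono hcover).trans (measure_iUnion_le _)
    _ = ∑' N, ∫⁻ v in firstEntry A (N + 1), stayProb P hG (v (Fin.last (N + 1)))
          ∂(L.map (pathPrefix (N + 1))) := by
        simp only [hL.measure_prefix_stayForever hG (measurableSet_firstEntry hA _)]
    _ ≤ ∑' N, c * L (F N) := by
        refine ENNReal.tsum_le_tsum fun N => ?_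
        rw [← Measure.map_apply (measurable_pathPrefix _) (measurableSet_firstEntry hA _),
          ← setLIntegral_const]
        exact setLIntegral_mono' (measurableSet_firstEntry hA _) fun v hv => hc _ hv.1
    _ = c * L (⋃ N, F N) := by
        rw [ENNReal.tsum_mul_left, measure_iUnion (pairwise_disjoint_preimage_firstEntry A) hF_meas]
    _ ≤ c := mul_le_of_le_one_right' prob_le_one

end IsMarkovPath

lemma ENNReal.eq_zero_of_le_mul_one_sub {a ε : ℝ≥0∞} (h : a ≤ a * (1 - ε)) (ha : a ≠ ⊤)
    (hε : 0 < ε) : a = 0 := by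
  by_contra h₀
  have hlt : a * (1 - ε) < a * 1 :=
    (ENNReal.mul_lt_mul_iff_right h₀ ha).mpr (ENNReal.sub_lt_self one_ne_top one_ne_zero hε.ne')
  exact (h.trans_lt (by rwa [mul_one] at hlt)).false

theorem nu_recurrent_of_small_set_with_sure_hitting_general
    {S : Type*} [MeasurableSpace S]
    (P : Kernel S S) [IsMarkovKernel P]
    (Pr : S → Measure (ℕ → S))
    (hPr : ∀ x : S, IsMarkovPath P (Measure.dirac x) (Pr x))
    (A : Set S) (hA : MeasurableSet A)
    (k : ℕ) (hk : 1 ≤ k) (ν : Measure S)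
    (β : ℝ≥0∞) (hβ : 0 < β)
    (hsmall : ∀ x ∈ A, β • ν ≤ kiter P k x)
    (hhit : ∀ x : S, Pr x {ω | hitTime A ω < ⊤} = 1) :
    ∀ B : Set S, MeasurableSet B → 0 < ν B →
      ∀ x : S, Pr x {ω | hitTime B ω < ⊤} = 1 := by
  intro B hB hνB x
  set u := ⨆ y, stayProb P hB.compl y
  have hbound_on_A (y : S) (hy : y ∈ A) : stayProb P hB.compl y ≤ u * (1 - β * ν B) :=
    stayProb_compl_le_of_smul_le_pow hB hk (kiter_eq_pow P k ▸ hsmall y hy)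
  have hbound (y : S) : stayProb P hB.compl y ≤ u * (1 - β * ν B) :=
    (hPr y).measure_stayForever_eq_stayProb hB.compl ▸
      (hPr y).measure_stayForever_le_of_hit hA hB.compl (hhit y) hbound_on_A
  have hu : u = 0 :=
    ENNReal.eq_zero_of_le_mul_one_sub (iSup_le hbound)
      (ne_top_of_le_ne_top ENNReal.one_ne_top (iSup_le (stayProb_le_one hB.compl)))
      (ENNReal.mul_pos hβ.ne' hνB.ne')
  have hx : stayProb P hB.compl x = 0 := le_antisymm (hu ▸ le_iSup _ x) zero_le
  have := (hPr x).1
  rw [setOf_hitTime_lt_top, prob_compl_eq_one_sub (measurableSet_forall_mem_apply_mem hB.compl _),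
    (hPr x).measure_stayForever_eq_stayProb hB.compl, hx, tsub_zero]

/-- If `A` is a small set (`P^k (x, ·) ≥ β ν` for all `x ∈ A`) whose hitting time is almost
surely finite from every starting point, then the chain is `ν`-recurrent. -/
theorem nu_recurrent_of_small_set_with_sure_hitting
    {S : Type*} [MeasurableSpace S] [MeasurableSpace.CountablyGenerated S]
    (P : Kernel S S) [IsMarkovKernel P]
    (Pr : S → Measure (ℕ → S))
    (hPr : ∀ x : S, IsMarkovPath P (Measure.dirac x) (Pr x))
    (A : Set S) (hA : MeasurableSet A)
    (k : ℕ) (hk : 1 ≤ k) (ν : Measure S) [IsProbabilityMeasure ν]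
    (β : ℝ≥0∞) (hβ : 0 < β)
    (hsmall : ∀ x ∈ A, β • ν ≤ kiter P k x)
    (hhit : ∀ x : S, Pr x {ω | hitTime A ω < ⊤} = 1) :
    ∀ B : Set S, MeasurableSet B → 0 < ν B →
      ∀ x : S, Pr x {ω | hitTime B ω < ⊤} = 1 :=
  nu_recurrent_of_small_set_with_sure_hitting_general P Pr hPr A hA k hk ν β hβ hsmall hhit
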